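/- Let Û_k be a unitary with Û_k|φ_0⟩ = |ψ_k⟩, an eigenvector of H with eigenvalue E_k. For any skew-Hermitian Ω with matrix elements Ω_{jl} = ⟨ψ_j|Ω|ψ_l⟩, the Riemannian Hessian bilinear form of f(U) = ⟨φ_0|U†HU|φ_0⟩ at Û_k in direction ΩÛ_k equals 2 Σ_{l=0}^{D−1} (E_l − E_k)|Ω_{lk}|². -/

import Mathlib

/-!
At `Û_k` the state `Û_k ρ₀ Û_k†` is the projector `P = |ψ_k⟩⟨ψ_k|`, and `HP = PH = E_k P`.
Unitarity removes `Û_k` from the trace, the eigen-relations collapse the double commutators to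
`2(HΩP + PΩH) − 2E_k(PΩ + ΩP)`, and cyclicity of the trace together with `Ω† = −Ω` turns the form
into `2⟨Ωψ_k|(H − E_k)|Ωψ_k⟩`. Expanding `H − E_k = Σ_l (E_l − E_k)|ψ_l⟩⟨ψ_l|` (completeness of the
orthonormal eigenbasis) gives the sum.
-/

open Matrix BigOperators

noncomputable section

/-- Matrix commutator `[A, B] = AB − BA`. -/
def mcomm {D : ℕ} (A B : Matrix (Fin D) (Fin D) ℂ) : Matrix (Fin D) (Fin D) ℂ :=
  A * B - B * A

/-- Riemannian Hessian applied to the tangent direction `ΩU`: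
`Hess f(U)[ΩU] = (1/2)([H,[Ω, UρU†]] + [[H,Ω], UρU†]) U`. -/
def rhess {D : ℕ} (H U ρ Ω : Matrix (Fin D) (Fin D) ℂ) : Matrix (Fin D) (Fin D) ℂ :=
  ((1 / 2 : ℂ) • (mcomm H (mcomm Ω (U * ρ * Uᴴ)) + mcomm (mcomm H Ω) (U * ρ * Uᴴ))) * U

section

variable {n : Type*} [Fintype n]

theorem star_dotProduct_vecMulVec_star_mulVec (a w : n → ℂ) :
    star w ⬝ᵥ vecMulVec a (star a) *ᵥ w = Complex.normSq (star a ⬝ᵥ w) := by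
  rw [vecMulVec_mulVec, Complex.normSq_eq_conj_mul_self]
  simp only [dotProduct_smul, MulOpposite.smul_eq_mul_unop, MulOpposite.unop_op]
  rw [star_dotProduct w a, Complex.star_def]

theorem mul_vecMulVec_star_mul_conjTranspose (U : Matrix n n ℂ) (φ : n → ℂ) :
    U * vecMulVec φ (star φ) * Uᴴ = vecMulVec (U *ᵥ φ) (star (U *ᵥ φ)) := by
  rw [mul_vecMulVec, vecMulVec_mul, star_mulVec]

theorem trace_mul_mul_mul_vecMulVec_of_conjTranspose_eq_neg {Ω : Matrix n n ℂ}
    (hΩ : Ωᴴ = -Ω) (M : Matrix n n ℂ) (ψ : n → ℂ) :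
    (Ω * M * Ω * vecMulVec ψ (star ψ)).trace = -(star (Ω *ᵥ ψ) ⬝ᵥ M *ᵥ (Ω *ᵥ ψ)) := by
  rw [mul_vecMulVec, trace_vecMulVec, star_mulVec, hΩ, vecMul_neg, neg_dotProduct, neg_neg,
    ← dotProduct_mulVec, mulVec_mulVec, mulVec_mulVec, dotProduct_comm]

variable [DecidableEq n]

theorem trace_conjTranspose_mul_mul_of_mem_unitaryGroup {U : Matrix n n ℂ}
    (hU : U ∈ unitaryGroup n ℂ) (Ω X : Matrix n n ℂ) :
    ((Ω * U)ᴴ * (X * U)).trace = (Ωᴴ * X).trace := by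
  have hUU : U * Uᴴ = 1 := mem_unitaryGroup_iff.mp hU
  calc ((Ω * U)ᴴ * (X * U)).trace = (Uᴴ * (Ωᴴ * X * U)).trace := by
        simp only [conjTranspose_mul, Matrix.mul_assoc]
    _ = (Ωᴴ * X * (U * Uᴴ)).trace := by rw [trace_mul_comm, Matrix.mul_assoc]
    _ = (Ωᴴ * X).trace := by rw [hUU, Matrix.mul_one]

theorem sum_vecMulVec_star_eq_one {ψ : n → n → ℂ}
    (hortho : ∀ j l, star (ψ j) ⬝ᵥ ψ l = if j = l then 1 else 0) :
    ∑ l, vecMulVec (ψ l) (star (ψ l)) = 1 := by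
  let A : Matrix n n ℂ := of fun i l => ψ l i
  have hAA : Aᴴ * A = 1 := by
    ext j l
    simpa [A, mul_apply, one_apply, dotProduct] using hortho j l
  have hAA' : A * Aᴴ = 1 := mul_eq_one_comm.mp hAA
  ext i m
  simpa [A, mul_apply, vecMulVec_apply, Matrix.sum_apply] using congr_fun₂ hAA' i m

variable {ψ : n → n → ℂ} {E : n → ℝ} {H : Matrix n n ℂ}
  (hortho : ∀ j l, star (ψ j) ⬝ᵥ ψ l = if j = l then 1 else 0)
  (hH : H = ∑ j, (E j : ℂ) • vecMulVec (ψ j) (star (ψ j)))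
include hortho hH

theorem mulVec_eq_smul_of_eq_sum_vecMulVec (k : n) : H *ᵥ ψ k = (E k : ℂ) • ψ k := by
  simp [hH, sum_mulVec, smul_mulVec, vecMulVec_mulVec, hortho]

theorem star_vecMul_eq_smul_of_eq_sum_vecMulVec (k : n) :
    star (ψ k) ᵥ* H = (E k : ℂ) • star (ψ k) := by
  simp [hH, vecMul_sum, vecMul_smul, vecMul_vecMulVec, hortho]

theorem star_dotProduct_sub_smul_one_mulVec_of_eq_sum_vecMulVec (e : ℝ) (w : n → ℂ) :
    star w ⬝ᵥ (H - (e : ℂ) • 1) *ᵥ w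
      = ((∑ l, (E l - e) * Complex.normSq (star (ψ l) ⬝ᵥ w) : ℝ) : ℂ) := by
  have hshift : H - (e : ℂ) • 1 = ∑ l, ((E l - e : ℝ) : ℂ) • vecMulVec (ψ l) (star (ψ l)) := by
    simp only [hH, ← sum_vecMulVec_star_eq_one hortho, Finset.smul_sum, ← Finset.sum_sub_distrib,
      Complex.ofReal_sub, sub_smul]
  rw [hshift, sum_mulVec, dotProduct_sum]
  push_cast
  refine Finset.sum_congr rfl fun l _ => ?_
  rw [smul_mulVec, dotProduct_smul, star_dotProduct_vecMulVec_star_mulVec, smul_eq_mul]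

end

section

variable {D : ℕ} {H P : Matrix (Fin D) (Fin D) ℂ} {e : ℂ}

theorem mcomm_mcomm_add_mcomm_mcomm_of_mul_eq_smul (hHP : H * P = e • P) (hPH : P * H = e • P)
    (Ω : Matrix (Fin D) (Fin D) ℂ) :
    mcomm H (mcomm Ω P) + mcomm (mcomm H Ω) P
      = (2 : ℂ) • (H * Ω * P + P * Ω * H - e • (P * Ω + Ω * P)) := by
  have hHPΩ : H * (P * Ω) = e • (P * Ω) := by rw [← Matrix.mul_assoc, hHP, smul_mul_assoc]
  have hΩPH : Ω * (P * H) = e • (Ω * P) := by rw [hPH, mul_smul_comm]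
  have hΩHP : Ω * (H * P) = e • (Ω * P) := by rw [hHP, mul_smul_comm]
  have hPHΩ : P * (H * Ω) = e • (P * Ω) := by rw [← Matrix.mul_assoc, hPH, smul_mul_assoc]
  simp only [mcomm, Matrix.mul_sub, Matrix.sub_mul, Matrix.mul_assoc]
  rw [hHPΩ, hΩPH, hΩHP, hPHΩ]
  module

theorem trace_mul_mcomm_mcomm_add_mcomm_mcomm_of_mul_eq_smul (hHP : H * P = e • P)
    (hPH : P * H = e • P) (Ω : Matrix (Fin D) (Fin D) ℂ) :
    (Ω * (mcomm H (mcomm Ω P) + mcomm (mcomm H Ω) P)).trace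
      = 4 * (Ω * (H - e • 1) * Ω * P).trace := by
  have hPΩH : (Ω * (P * (Ω * H))).trace = (Ω * (H * (Ω * P))).trace := by
    rw [trace_mul_comm]
    simp only [Matrix.mul_assoc]
    rw [trace_mul_comm]
    simp only [Matrix.mul_assoc]
  have hPΩ : (Ω * (P * Ω)).trace = (Ω * (Ω * P)).trace := trace_mul_cycle' _ _ _
  rw [mcomm_mcomm_add_mcomm_mcomm_of_mul_eq_smul hHP hPH]
  simp only [Matrix.mul_smul, Matrix.mul_add, Matrix.mul_sub, Matrix.sub_mul, Matrix.smul_mul,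
    Matrix.mul_one, Matrix.mul_assoc, trace_smul, trace_add, trace_sub, hPΩH, hPΩ, smul_eq_mul]
  ring

end

theorem hessian_bilinear_form_general (D : ℕ) (H : Matrix (Fin D) (Fin D) ℂ)
    (E : Fin D → ℝ) (ψ : Fin D → (Fin D → ℂ))
    (hortho : ∀ j l : Fin D, star (ψ j) ⬝ᵥ ψ l = if j = l then 1 else 0)
    (hH : H = ∑ j, (E j : ℂ) • vecMulVec (ψ j) (star (ψ j)))
    (φ0 : Fin D → ℂ)
    (k : Fin D) (Uk : Matrix (Fin D) (Fin D) ℂ)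
    (hUk : Uk ∈ Matrix.unitaryGroup (Fin D) ℂ)
    (hcrit : Uk.mulVec φ0 = ψ k)
    (Ω : Matrix (Fin D) (Fin D) ℂ) (hΩ : Ωᴴ = -Ω) :
    (((Ω * Uk)ᴴ * rhess H Uk (vecMulVec φ0 (star φ0)) Ω).trace).re
      = 2 * ∑ l, (E l - E k) * Complex.normSq (star (ψ l) ⬝ᵥ Ω.mulVec (ψ k)) := by
  set P := vecMulVec (ψ k) (star (ψ k))
  have hρ : Uk * vecMulVec φ0 (star φ0) * Ukᴴ = P := by
    rw [mul_vecMulVec_star_mul_conjTranspose, hcrit]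
  have hHP : H * P = (E k : ℂ) • P := by
    rw [mul_vecMulVec, mulVec_eq_smul_of_eq_sum_vecMulVec hortho hH, smul_vecMulVec]
  have hPH : P * H = (E k : ℂ) • P := by
    rw [vecMulVec_mul, star_vecMul_eq_smul_of_eq_sum_vecMulVec hortho hH, vecMulVec_smul]
  calc (((Ω * Uk)ᴴ * rhess H Uk (vecMulVec φ0 (star φ0)) Ω).trace).re
      = (-(1 / 2 : ℂ) * (Ω * (mcomm H (mcomm Ω P) + mcomm (mcomm H Ω) P)).trace).re := by
        rw [rhess, hρ, trace_conjTranspose_mul_mul_of_mem_unitaryGroup hUk, hΩ, Matrix.mul_smul,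
          trace_smul, Matrix.neg_mul, trace_neg, smul_eq_mul, mul_neg, neg_mul]
    _ = (2 * (star (Ω *ᵥ ψ k) ⬝ᵥ (H - (E k : ℂ) • 1) *ᵥ (Ω *ᵥ ψ k))).re := by
        rw [trace_mul_mcomm_mcomm_add_mcomm_mcomm_of_mul_eq_smul hHP hPH,
          trace_mul_mul_mul_vecMulVec_of_conjTranspose_eq_neg hΩ]
        ring_nf
    _ = _ := by
        rw [star_dotProduct_sub_smul_one_mulVec_of_eq_sum_vecMulVec hortho hH]
        norm_cast

/-- at a critical point `Û_k` with `Û_k|φ₀⟩ = |ψ_k⟩`, the Hessian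
bilinear form in direction `ΩÛ_k` equals `2 Σ_l (E_l − E_k)|Ω_{lk}|²`. -/
theorem hessian_bilinear_form (D : ℕ) (H : Matrix (Fin D) (Fin D) ℂ)
    (E : Fin D → ℝ) (ψ : Fin D → (Fin D → ℂ))
    (hortho : ∀ j l : Fin D, star (ψ j) ⬝ᵥ ψ l = if j = l then 1 else 0)
    (hH : H = ∑ j, (E j : ℂ) • vecMulVec (ψ j) (star (ψ j)))
    (φ0 : Fin D → ℂ) (hφ0 : star φ0 ⬝ᵥ φ0 = 1)
    (k : Fin D) (Uk : Matrix (Fin D) (Fin D) ℂ)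
    (hUk : Uk ∈ Matrix.unitaryGroup (Fin D) ℂ)
    (hcrit : Uk.mulVec φ0 = ψ k)
    (Ω : Matrix (Fin D) (Fin D) ℂ) (hΩ : Ωᴴ = -Ω) :
    (((Ω * Uk)ᴴ * rhess H Uk (vecMulVec φ0 (star φ0)) Ω).trace).re
      = 2 * ∑ l, (E l - E k) * Complex.normSq (star (ψ l) ⬝ᵥ Ω.mulVec (ψ k)) :=
  hessian_bilinear_form_general D H E ψ hortho hH φ0 k Uk hUk hcrit Ω hΩ
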